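/- Let C ⊆ ℝ^{r+1} be a polyhedral cone with dim C = r + 1, and let f : C → ℝ be a superlinear function such that for every 2-dimensional linear subspace H ⊆ ℝ^{r+1} the restriction of f to H ∩ C is piecewise linear. Let C' ⊆ C be a polyhedral subcone of dimension r + 1 on which f is linear, and let ℓ : ℝ^{r+1} → ℝ be the unique linear function agreeing with f on C'. Then the set {z ∈ C : f(z) = ℓ(z)} is a topologically closed convex cone (closed under addition and under multiplication by nonnegative reals). -/

import Mathlib

/-!
Superlinearity of `f`, together with `f = ℓ` near an interior point `x₀` of `C'`, gives `f ≤ ℓ`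
on `C`; hence the agreement locus `S` is a convex cone. For closedness let `z ∈ closure S`.
The points `t • x₀ + (1 - t) • z`, `0 < t ≤ 1`, are interior points of `C` in `closure S`, so they
lie in `S` because the concave function `f` is continuous on the interior of `C`. They also lie in
the plane spanned by `x₀` and `z`, on which `f` is piecewise linear; agreement with `ℓ` is a closed
condition on each of the finitely many pieces, which are closed by conic Carathéodory, so it
passes to the limit `z`.
-/

/-- A polyhedral cone in `ℝⁿ`: the set of nonnegative real combinations of finitely many
vectors. -/
def IsPolyhedralCone {n : ℕ} (C : Set (Fin n → ℝ)) : Prop :=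
  ∃ (k : ℕ) (v : Fin k → Fin n → ℝ),
    C = {x | ∃ c : Fin k → ℝ, (∀ i, 0 ≤ c i) ∧ x = ∑ i, c i • v i}

/-- A function is piecewise linear on a set `C` if `C` admits a finite decomposition into
polyhedral cones on each of which the function agrees with a linear function. -/
def IsPiecewiseLinearOn {n : ℕ} (f : (Fin n → ℝ) → ℝ) (C : Set (Fin n → ℝ)) : Prop :=
  ∃ (m : ℕ) (D : Fin m → Set (Fin n → ℝ)),
    (∀ i, IsPolyhedralCone (D i)) ∧ C = ⋃ i, D i ∧
    ∀ i, ∃ ℓ : (Fin n → ℝ) →ₗ[ℝ] ℝ, ∀ x ∈ D i, f x = ℓ x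

open Filter Topology Set

section ConicCaratheodory

variable {ι E : Type*} [AddCommGroup E] [Module ℝ E]

theorem exists_sum_erase_eq_of_sum_smul_eq_zero [DecidableEq ι] (v : ι → E) {s : Finset ι}
    {c d : ι → ℝ} (hc : ∀ i ∈ s, 0 ≤ c i) (hd : ∑ i ∈ s, d i • v i = 0) (hpos : ∃ i ∈ s, 0 < d i) :
    ∃ j ∈ s, ∃ c' : ι → ℝ, (∀ i ∈ s.erase j, 0 ≤ c' i) ∧
      ∑ i ∈ s.erase j, c' i • v i = ∑ i ∈ s, c i • v i := by
  obtain ⟨j, hj, hmin⟩ := (s.filter (0 < d ·)).exists_min_image (fun i => c i / d i)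
    (by simpa [Finset.Nonempty] using hpos)
  rw [Finset.mem_filter] at hj
  -- move from `c` in direction `-d` until the first coefficient, `c j`, vanishes
  refine ⟨j, hj.1, fun i => c i - c j / d j * d i, fun i hi => ?_, ?_⟩
  · have hi := Finset.mem_of_mem_erase hi
    rcases lt_or_ge 0 (d i) with hdi | hdi
    · have := hmin i (Finset.mem_filter.2 ⟨hi, hdi⟩)
      rw [le_div_iff₀ hdi] at this
      linarith
    · nlinarith [hc i hi, div_nonneg (hc j hj.1) hj.2.le]
  · have hcj : c j - c j / d j * d j = 0 := by rw [div_mul_cancel₀ _ hj.2.ne', sub_self]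
    rw [Finset.sum_erase _ (by simp [hcj])]
    simp [sub_smul, Finset.sum_sub_distrib, mul_smul, ← Finset.smul_sum, hd]

theorem exists_linearIndepOn_sum_smul_eq (v : ι → E) (s : Finset ι) {c : ι → ℝ}
    (hc : ∀ i ∈ s, 0 ≤ c i) :
    ∃ t ⊆ s, LinearIndepOn ℝ v t ∧
      ∃ c' : t → ℝ, (∀ i, 0 ≤ c' i) ∧ ∑ i, c' i • v i = ∑ i ∈ s, c i • v i := by
  classical
  induction s using Finset.strongInduction generalizing c with
  | H s ih =>
  by_cases hs : LinearIndepOn ℝ v s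
  · exact ⟨s, subset_rfl, hs, fun i => c i, fun i => hc i i.2,
      Finset.sum_coe_sort s fun i => c i • v i⟩
  obtain ⟨d, hd, hpos⟩ : ∃ d : ι → ℝ, ∑ i ∈ s, d i • v i = 0 ∧ ∃ i ∈ s, 0 < d i := by
    obtain ⟨d, hd, i, hi, hdi⟩ := not_linearIndepOn_finset_iff.mp hs
    rcases hdi.lt_or_gt with hdi | hdi
    · exact ⟨-d, by simp [neg_smul, hd], i, hi, by simpa using hdi⟩
    · exact ⟨d, hd, i, hi, hdi⟩
  obtain ⟨j, hj, c', hc', hsum⟩ := exists_sum_erase_eq_of_sum_smul_eq_zero v hc hd hpos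
  obtain ⟨t, hts, ht, c'', hc'', hsum'⟩ := ih _ (Finset.erase_ssubset hj) hc'
  exact ⟨t, hts.trans (s.erase_subset j), ht, c'', hc'', hsum'.trans hsum⟩

theorem LinearIndependent.isClosed_setOf_nonneg_sum_smul [TopologicalSpace E]
    [IsTopologicalAddGroup E] [ContinuousSMul ℝ E] [T2Space E] [Fintype ι] {v : ι → E}
    (hv : LinearIndependent ℝ v) :
    IsClosed {x | ∃ c : ι → ℝ, (∀ i, 0 ≤ c i) ∧ ∑ i, c i • v i = x} := by
  have hemb := LinearMap.isClosedEmbedding_of_injective (LinearMap.ker_eq_bot.2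
    (linearIndependent_iff_injective_fintypeLinearCombination.1 hv))
  convert hemb.isClosedMap _ (isClosed_Ici (a := (0 : ι → ℝ))) using 1
  ext x
  simp [Fintype.linearCombination_apply, Pi.le_def]

end ConicCaratheodory

namespace IsPolyhedralCone

variable {n : ℕ} {C : Set (Fin n → ℝ)}

theorem isClosed (hC : IsPolyhedralCone C) : IsClosed C := by
  obtain ⟨k, v, rfl⟩ := hC
  convert isClosed_iUnion_of_finite fun t : {t : Finset (Fin k) // LinearIndepOn ℝ v t} =>
    LinearIndependent.isClosed_setOf_nonneg_sum_smul t.2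
  ext x
  simp only [mem_iUnion, mem_ofPred_eq]
  constructor
  · rintro ⟨c, hc, rfl⟩
    obtain ⟨t, -, ht, c', hc', hsum⟩ :=
      exists_linearIndepOn_sum_smul_eq v Finset.univ fun i _ => hc i
    exact ⟨⟨t, ht⟩, c', hc', hsum⟩
  · rintro ⟨⟨t, _⟩, c, hc, rfl⟩
    refine ⟨fun i => if h : i ∈ t then c ⟨i, h⟩ else 0, fun i => ?_, ?_⟩
    · by_cases h : i ∈ t <;> simp [h, hc]
    · rw [← Finset.sum_subset t.subset_univ (by simp +contextual), ← Finset.sum_coe_sort t]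
      simp

theorem exists_pointedCone (hC : IsPolyhedralCone C) :
    ∃ K : PointedCone ℝ (Fin n → ℝ), (K : Set (Fin n → ℝ)) = C := by
  obtain ⟨k, v, rfl⟩ := hC
  refine ⟨{ carrier := _, add_mem' := ?_, zero_mem' := ?_, smul_mem' := ?_ }, rfl⟩
  · rintro _ _ ⟨c, hc, rfl⟩ ⟨c', hc', rfl⟩
    exact ⟨c + c', fun i => add_nonneg (hc i) (hc' i), by simp [add_smul, Finset.sum_add_distrib]⟩
  · exact ⟨0, fun _ => le_rfl, by simp⟩
  · rintro a _ ⟨c, hc, rfl⟩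
    exact ⟨fun i => a * c i, fun i => mul_nonneg a.2 (hc i), by
      simp only [Finset.smul_sum, mul_smul]; rfl⟩

end IsPolyhedralCone

theorem IsOpen.exists_mem_ne {X : Type*} [TopologicalSpace X] [∀ x : X, (𝓝[≠] x).NeBot]
    {U : Set X} (hU : IsOpen U) (hne : U.Nonempty) (a : X) : ∃ x ∈ U, x ≠ a := by
  obtain ⟨x, hx⟩ := hne
  obtain rfl | hxa := eq_or_ne x a
  · have : ∀ᶠ y in 𝓝[≠] x, y ∈ U ∧ y ≠ x :=
      (eventually_nhdsWithin_of_eventually_nhds (hU.mem_nhds hx)).and self_mem_nhdsWithin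
    exact this.exists
  · exact ⟨x, hx, hxa⟩

theorem IsPiecewiseLinearOn.isClosed_setOf_eq {n : ℕ} {f : (Fin n → ℝ) → ℝ}
    {A : Set (Fin n → ℝ)} (hf : IsPiecewiseLinearOn f A) (ℓ : (Fin n → ℝ) →ₗ[ℝ] ℝ) :
    IsClosed {x ∈ A | f x = ℓ x} := by
  obtain ⟨m, D, hD, rfl, hlin⟩ := hf
  choose ℓ' hℓ' using hlin
  have hpieces : {x ∈ ⋃ i, D i | f x = ℓ x} = ⋃ i, D i ∩ {x | ℓ' i x = ℓ x} := by
    ext x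
    simp only [mem_iUnion, mem_inter_iff, mem_ofPred_eq]
    constructor
    · rintro ⟨⟨i, hi⟩, hx⟩
      exact ⟨i, hi, hℓ' i x hi ▸ hx⟩
    · rintro ⟨i, hi, hx⟩
      exact ⟨⟨i, hi⟩, hℓ' i x hi ▸ hx⟩
  rw [hpieces]
  exact isClosed_iUnion_of_finite fun i => (hD i).isClosed.inter
    (isClosed_eq (ℓ' i).continuous_of_finiteDimensional ℓ.continuous_of_finiteDimensional)

theorem PointedCone.smul_mem_of_combo_mem {E : Type*} [AddCommGroup E] [Module ℝ E]
    {S : PointedCone ℝ E} {x₀ : E} (hx₀ : x₀ ∈ S) {c : ℝ}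
    (hseg : ∀ t : ℝ, 0 < t → t ≤ 1 → t • x₀ + (1 - t) • c • x₀ ∈ S) : c • x₀ ∈ S := by
  rcases le_or_gt 0 c with hc | hc
  · exact S.smul_mem hc hx₀
  -- the segment from `x₀` to `c • x₀` passes through `(c / 2) • x₀`
  set t := -c / (2 * (1 - c))
  have hhalf : (2 : ℝ) • (t • x₀ + (1 - t) • c • x₀) = c • x₀ := by
    have ht : t * (2 * (1 - c)) = -c := div_mul_cancel₀ _ (by linarith)
    simp only [smul_smul, ← add_smul]
    congr 1
    linear_combination ht
  rw [← hhalf]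
  refine S.smul_mem zero_le_two (hseg t (div_pos (by linarith) (by linarith)) ?_)
  rw [div_le_one (by linarith)]
  linarith

def IsSuperlinearOn {E : Type*} [AddCommGroup E] [Module ℝ E] (f : E → ℝ) (C : Set E) : Prop :=
  ∀ x ∈ C, ∀ y ∈ C, ∀ a b : ℝ, 0 ≤ a → 0 ≤ b → a * f x + b * f y ≤ f (a • x + b • y)

namespace IsSuperlinearOn

section Algebraic

variable {E : Type*} [AddCommGroup E] [Module ℝ E] {f : E → ℝ} {C : Set E}

theorem concaveOn (hf : IsSuperlinearOn f C) (hC : Convex ℝ C) : ConcaveOn ℝ C f :=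
  ⟨hC, fun x hx y hy a b ha hb _ => hf x hx y hy a b ha hb⟩

theorem add_le (hf : IsSuperlinearOn f C) {x y : E} (hx : x ∈ C) (hy : y ∈ C) :
    f x + f y ≤ f (x + y) := by
  simpa using hf x hx y hy 1 1 zero_le_one zero_le_one

theorem smul_le (hf : IsSuperlinearOn f C) {x : E} (hx : x ∈ C) {a : ℝ} (ha : 0 ≤ a) :
    a * f x ≤ f (a • x) := by
  simpa using hf x hx x hx a 0 ha le_rfl

theorem le_of_eventuallyEq [TopologicalSpace E] [IsTopologicalAddGroup E] [ContinuousSMul ℝ E]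
    (hf : IsSuperlinearOn f C) {ℓ : E →ₗ[ℝ] ℝ} {x₀ z : E} (hx₀ : x₀ ∈ interior C)
    (hℓ : f =ᶠ[𝓝 x₀] ℓ) (hz : z ∈ C) : f z ≤ ℓ z := by
  have hlim : Tendsto (fun ε : ℝ => x₀ - ε • z) (𝓝[>] 0) (𝓝 x₀) := by
    have : Continuous fun ε : ℝ => x₀ - ε • z := by fun_prop
    simpa using (this.tendsto 0).mono_left nhdsWithin_le_nhds
  obtain ⟨ε, ⟨hεC, hεℓ⟩, hε⟩ := (((hlim.eventually (mem_interior_iff_mem_nhds.1 hx₀)).and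
    (hlim.eventually hℓ)).and self_mem_nhdsWithin).exists
  -- superadditivity along the splitting `x₀ = (x₀ - ε • z) + ε • z`
  have hsplit := hf _ hεC z hz 1 ε zero_le_one (le_of_lt hε)
  simp only [one_mul, one_smul, sub_add_cancel, hεℓ, map_sub, map_smul, smul_eq_mul,
    hℓ.eq_of_nhds] at hsplit
  nlinarith

variable {K : PointedCone ℝ E}

def eqLocus (hf : IsSuperlinearOn f K) {ℓ : E →ₗ[ℝ] ℝ} (hle : ∀ z ∈ K, f z ≤ ℓ z) :
    PointedCone ℝ E where
  carrier := {z ∈ K | f z = ℓ z}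
  add_mem' := by
    rintro x y ⟨hx, hfx⟩ ⟨hy, hfy⟩
    refine ⟨K.add_mem hx hy, le_antisymm (hle _ (K.add_mem hx hy)) ?_⟩
    simpa [hfx, hfy] using hf.add_le hx hy
  zero_mem' := by
    refine ⟨K.zero_mem, le_antisymm (by simpa using hle 0 K.zero_mem) ?_⟩
    simpa using hf.smul_le K.zero_mem le_rfl
  smul_mem' := by
    rintro a x ⟨hx, hfx⟩
    refine ⟨K.smul_mem a.2 hx, le_antisymm (hle _ (K.smul_mem a.2 hx)) ?_⟩
    show ℓ ((a : ℝ) • x) ≤ f ((a : ℝ) • x)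
    rw [map_smul, smul_eq_mul, ← hfx]
    exact hf.smul_le hx a.2

end Algebraic

section Normed

variable {E : Type*} [NormedAddCommGroup E] [NormedSpace ℝ E] [FiniteDimensional ℝ E]
  {f : E → ℝ} {K : PointedCone ℝ E} {ℓ : E →ₗ[ℝ] ℝ}

theorem mem_eqLocus_of_mem_closure (hf : IsSuperlinearOn f K) (hle : ∀ z ∈ K, f z ≤ ℓ z)
    {z : E} (hz : z ∈ closure (hf.eqLocus hle : Set E)) (hzK : z ∈ interior (K : Set E)) :
    z ∈ hf.eqLocus hle := by
  have hfz : ContinuousAt f z :=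
    ((hf.concaveOn K.convex).continuousOn_interior).continuousAt (isOpen_interior.mem_nhds hzK)
  refine ⟨interior_subset hzK, tendsto_nhds_unique_of_frequently_eq hfz
    ℓ.continuous_of_finiteDimensional.continuousAt ?_⟩
  exact (mem_closure_iff_frequently.1 hz).mono fun x hx => hx.2

theorem combo_mem_eqLocus (hf : IsSuperlinearOn f K) (hle : ∀ z ∈ K, f z ≤ ℓ z) {x₀ z : E}
    (hx₀ : x₀ ∈ hf.eqLocus hle) (hx₀K : x₀ ∈ interior (K : Set E))
    (hz : z ∈ closure (hf.eqLocus hle : Set E)) {t : ℝ} (ht₀ : 0 < t) (ht₁ : t ≤ 1) :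
    t • x₀ + (1 - t) • z ∈ hf.eqLocus hle := by
  refine hf.mem_eqLocus_of_mem_closure hle ?_ ?_
  · exact (hf.eqLocus hle).convex.closure (subset_closure hx₀) hz ht₀.le (by linarith) (by ring)
  · exact K.convex.combo_interior_closure_mem_interior hx₀K
      (closure_mono (fun _ hx => hx.1) hz) ht₀ (by linarith) (by ring)

end Normed

theorem isClosed_eqLocus {n : ℕ} {f : (Fin n → ℝ) → ℝ} {K : PointedCone ℝ (Fin n → ℝ)}
    {ℓ : (Fin n → ℝ) →ₗ[ℝ] ℝ} (hf : IsSuperlinearOn f K) (hle : ∀ z ∈ K, f z ≤ ℓ z)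
    (hH : ∀ H : Submodule ℝ (Fin n → ℝ), Module.finrank ℝ H = 2 →
      IsPiecewiseLinearOn f ((H : Set (Fin n → ℝ)) ∩ K))
    {x₀ : Fin n → ℝ} (hx₀ : x₀ ∈ hf.eqLocus hle) (hx₀K : x₀ ∈ interior (K : Set (Fin n → ℝ)))
    (hx₀0 : x₀ ≠ 0) :
    IsClosed (hf.eqLocus hle : Set (Fin n → ℝ)) := by
  refine isClosed_of_closure_subset fun z hz => ?_
  have hseg : ∀ t : ℝ, 0 < t → t ≤ 1 → t • x₀ + (1 - t) • z ∈ hf.eqLocus hle :=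
    fun t ht₀ ht₁ => hf.combo_mem_eqLocus hle hx₀ hx₀K hz ht₀ ht₁
  by_cases hline : ∃ c : ℝ, c • x₀ = z
  · obtain ⟨c, rfl⟩ := hline
    exact PointedCone.smul_mem_of_combo_mem hx₀ hseg
  · push Not at hline
    set H := Submodule.span ℝ (range ![x₀, z])
    have hH2 : Module.finrank ℝ H = 2 := by
      rw [finrank_span_eq_card ((LinearIndependent.pair_iff' hx₀0).2 hline)]
      simp
    have hlim : Tendsto (fun t : ℝ => t • x₀ + (1 - t) • z) (𝓝[>] 0) (𝓝 z) := by
      have : Continuous fun t : ℝ => t • x₀ + (1 - t) • z := by fun_prop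
      simpa using (this.tendsto 0).mono_left nhdsWithin_le_nhds
    have hmem : ∀ᶠ t in 𝓝[>] (0 : ℝ),
        t • x₀ + (1 - t) • z ∈ {x ∈ (H : Set (Fin n → ℝ)) ∩ K | f x = ℓ x} := by
      filter_upwards [Ioc_mem_nhdsGT zero_lt_one] with t ht
      have hw := hseg t ht.1 ht.2
      refine ⟨⟨H.add_mem (H.smul_mem _ ?_) (H.smul_mem _ ?_), hw.1⟩, hw.2⟩
      · exact Submodule.subset_span ⟨0, rfl⟩
      · exact Submodule.subset_span ⟨1, rfl⟩
    have hz' := ((hH H hH2).isClosed_setOf_eq ℓ).mem_of_tendsto hlim hmem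
    exact ⟨hz'.1.2, hz'.2⟩

end IsSuperlinearOn

theorem agreement_locus_closed_cone_general
    (r : ℕ) (C C' : Set (Fin (r + 1) → ℝ)) (hC : IsPolyhedralCone C)
    (f : (Fin (r + 1) → ℝ) → ℝ)
    (hsuper : ∀ x ∈ C, ∀ y ∈ C, ∀ a b : ℝ, 0 ≤ a → 0 ≤ b →
      a * f x + b * f y ≤ f (a • x + b • y))
    (hH : ∀ H : Submodule ℝ (Fin (r + 1) → ℝ), Module.finrank ℝ H = 2 →
      IsPiecewiseLinearOn f ((H : Set (Fin (r + 1) → ℝ)) ∩ C))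
    (hC'sub : C' ⊆ C) (hdim' : (interior C').Nonempty)
    (ℓ : (Fin (r + 1) → ℝ) →ₗ[ℝ] ℝ) (hℓ : ∀ x ∈ C', f x = ℓ x) :
    IsClosed {z ∈ C | f z = ℓ z} ∧
    Convex ℝ {z ∈ C | f z = ℓ z} ∧
    (∀ x ∈ {z ∈ C | f z = ℓ z}, ∀ y ∈ {z ∈ C | f z = ℓ z},
      x + y ∈ {z ∈ C | f z = ℓ z}) ∧
    (∀ x ∈ {z ∈ C | f z = ℓ z}, ∀ a : ℝ, 0 ≤ a → a • x ∈ {z ∈ C | f z = ℓ z}) := by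
  obtain ⟨K, rfl⟩ := hC.exists_pointedCone
  have hf : IsSuperlinearOn f K := hsuper
  obtain ⟨x₀, hx₀, hx₀0⟩ := isOpen_interior.exists_mem_ne hdim' 0
  have hx₀C' : x₀ ∈ C' := interior_subset hx₀
  have hx₀K : x₀ ∈ interior (K : Set (Fin (r + 1) → ℝ)) := interior_mono hC'sub hx₀
  have hfℓ : f =ᶠ[𝓝 x₀] ℓ := mem_of_superset (mem_interior_iff_mem_nhds.1 hx₀) hℓ
  have hle : ∀ z ∈ K, f z ≤ ℓ z := fun z hz => hf.le_of_eventuallyEq hx₀K hfℓ hz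
  set S := hf.eqLocus hle
  exact ⟨hf.isClosed_eqLocus hle hH ⟨hC'sub hx₀C', hℓ x₀ hx₀C'⟩ hx₀K hx₀0, S.convex,
    fun x hx y hy => S.add_mem hx hy, fun x hx a ha => S.smul_mem ha hx⟩

/-- **The locus where a superlinear function agrees with a full-dimensional linear piece
is a closed convex cone.** Let `C ⊆ ℝ^{r+1}` be a polyhedral cone of full dimension
`r+1`, `f : C → ℝ` superlinear with piecewise linear restriction to `H ∩ C` for every
2-dimensional subspace `H`. Let `C' ⊆ C` be a full-dimensional polyhedral subcone on
which `f` is linear, with `ℓ` the (unique) linear function agreeing with `f` on `C'`.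
Then `{z ∈ C : f z = ℓ z}` is a topologically closed convex cone. -/
theorem agreement_locus_closed_cone
    (r : ℕ) (C C' : Set (Fin (r + 1) → ℝ)) (hC : IsPolyhedralCone C)
    (hdim : (interior C).Nonempty)
    (f : (Fin (r + 1) → ℝ) → ℝ)
    (hsuper : ∀ x ∈ C, ∀ y ∈ C, ∀ a b : ℝ, 0 ≤ a → 0 ≤ b →
      a * f x + b * f y ≤ f (a • x + b • y))
    (hH : ∀ H : Submodule ℝ (Fin (r + 1) → ℝ), Module.finrank ℝ H = 2 →
      IsPiecewiseLinearOn f ((H : Set (Fin (r + 1) → ℝ)) ∩ C))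
    (hC' : IsPolyhedralCone C') (hC'sub : C' ⊆ C) (hdim' : (interior C').Nonempty)
    (ℓ : (Fin (r + 1) → ℝ) →ₗ[ℝ] ℝ) (hℓ : ∀ x ∈ C', f x = ℓ x) :
    IsClosed {z ∈ C | f z = ℓ z} ∧
    Convex ℝ {z ∈ C | f z = ℓ z} ∧
    (∀ x ∈ {z ∈ C | f z = ℓ z}, ∀ y ∈ {z ∈ C | f z = ℓ z},
      x + y ∈ {z ∈ C | f z = ℓ z}) ∧
    (∀ x ∈ {z ∈ C | f z = ℓ z}, ∀ a : ℝ, 0 ≤ a → a • x ∈ {z ∈ C | f z = ℓ z}) :=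
  agreement_locus_closed_cone_general r C C' hC f hsuper hH hC'sub hdim' ℓ hℓ
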